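/- For any n-type P on a finite alphabet A of size m and any PMF Q on A, the probability under the product measure Q^n of the type class T(P) satisfies (n+1)^{−m} e^{−nD(P‖Q)} ≤ Q^n(T(P)) ≤ e^{−nD(P‖Q)}. -/

import Mathlib

open scoped Classical BigOperators ENNReal

/-- The empirical PMF (type) of a string `x ∈ A^n`. -/
noncomputable def empPMF {A : Type*} [Fintype A] (n : ℕ) (x : Fin n → A) (a : A) : ℝ :=
  ((Finset.univ.filter (fun i : Fin n => x i = a)).card : ℝ) / n

/-- Relative entropy `D(P‖Q)` as an extended real, with `D = +∞` when `P` is not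
absolutely continuous with respect to `Q`. -/
noncomputable def relEntE {A : Type*} [Fintype A] (P Q : A → ℝ) : EReal :=
  if ∀ a, Q a = 0 → P a = 0 then ((∑ a, P a * Real.log (P a / Q a) : ℝ) : EReal) else ⊤

/-! Writing `k = nP`, every string of `T(P)` has `Q^n`-probability
`∏ Q(a)^{k_a} = e^{-nD(P‖Q)} ∏ P(a)^{k_a}`, so `Q^n(T(P)) = e^{-nD(P‖Q)} P^n(T(P))`
and the upper bound is `P^n(T(P)) ≤ 1`. By orbit–stabiliser for `Perm (Fin n)` acting on strings,
`|T(c)| ∏ c_a! = n!`; together with `k^c k! ≤ k^k c!` this shows that `T(P)` has the largest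
`P^n`-probability among all type classes. There are at most `(n+1)^m` type classes and their
`P^n`-probabilities add up to `1`, whence `P^n(T(P)) ≥ (n+1)^{-m}`. -/

open Finset
open scoped Nat

lemma Nat.pow_mul_factorial_le_pow_mul_factorial (k c : ℕ) : k ^ c * k ! ≤ k ^ k * c ! := by
  rcases le_total c k with h | h
  · have hk : c ! * k.descFactorial (k - c) = k ! := by
      simpa only [Nat.sub_sub_self h] using Nat.factorial_mul_descFactorial (Nat.sub_le k c)
    calc k ^ c * k ! = k ^ c * (c ! * k.descFactorial (k - c)) := by rw [hk]
      _ ≤ k ^ c * (c ! * k ^ (k - c)) := by gcongr; exact Nat.descFactorial_le_pow k _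
      _ = k ^ (c + (k - c)) * c ! := by ring
      _ = k ^ k * c ! := by rw [Nat.add_sub_cancel' h]
  · calc k ^ c * k ! = k ^ (k + (c - k)) * k ! := by rw [Nat.add_sub_cancel' h]
      _ = k ^ k * (k ! * k ^ (c - k)) := by ring
      _ ≤ k ^ k * c ! := by gcongr; exact Nat.factorial_mul_pow_sub_le_factorial h

lemma Real.pow_eq_exp_neg_mul_log_div_mul_pow {p q : ℝ} (k : ℕ) (hp : 0 < p) (hq : 0 < q) :
    q ^ k = exp (-(k * log (p / q))) * p ^ k := by
  rw [← mul_neg, ← log_inv, inv_div, exp_nat_mul, exp_log (div_pos hq hp), div_pow,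
    div_mul_cancel₀ _ (pow_ne_zero _ hp.ne')]

lemma EReal.exp_neg_natCast_mul_coe (n : ℕ) (D : ℝ) :
    EReal.exp (-(n : EReal) * D) = ENNReal.ofReal (Real.exp (-n * D)) := by
  rw [← EReal.exp_coe]
  push_cast
  rfl

lemma EReal.exp_neg_natCast_mul_top {n : ℕ} (hn : 0 < n) :
    EReal.exp (-(n : EReal) * ⊤) = 0 := by
  rw [EReal.mul_top_of_neg (by simpa [EReal.neg_lt_zero] using hn), EReal.exp_bot]

lemma ENNReal.inv_natCast_add_one_pow_mul_ofReal_le {N m : ℕ} {e p : ℝ} (he : 0 ≤ e)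
    (h : 1 ≤ ((N : ℝ) + 1) ^ m * p) :
    ((N + 1 : ℝ≥0∞) ^ m)⁻¹ * ENNReal.ofReal e ≤ ENNReal.ofReal (e * p) := by
  have hpos : (0 : ℝ) < ((N : ℝ) + 1) ^ m := by positivity
  have hcast : ((N + 1 : ℝ≥0∞) ^ m) = ENNReal.ofReal (((N : ℝ) + 1) ^ m) := by
    rw [ENNReal.ofReal_pow (by positivity)]
    norm_cast
  rw [hcast, ← ENNReal.ofReal_inv_of_pos hpos, ← ENNReal.ofReal_mul (inv_nonneg.mpr hpos.le),
    mul_comm e]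
  exact ENNReal.ofReal_le_ofReal
    (mul_le_mul_of_nonneg_right ((inv_le_iff_one_le_mul₀' hpos).mpr h) he)

namespace StringType

variable {α A : Type*} [Fintype α] [Fintype A]

noncomputable def letterCount (x : α → A) (a : A) : ℕ := #{i | x i = a}

variable (α) in
noncomputable def typeClass [DecidableEq α] (c : A → ℕ) : Finset (α → A) :=
  {x | letterCount x = c}

omit [Fintype A] in
lemma letterCount_eq_card_subtype (x : α → A) (a : A) :
    letterCount x a = Fintype.card {i // x i = a} :=
  (Fintype.card_subtype _).symm

omit [Fintype A] in
lemma letterCount_comp_perm (x : α → A) (σ : Equiv.Perm α) :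
    letterCount (x ∘ σ) = letterCount x := by
  funext a
  simp only [letterCount_eq_card_subtype]
  exact Fintype.card_congr (σ.subtypeEquiv fun _ => Iff.rfl)

lemma sum_letterCount (x : α → A) : ∑ a, letterCount x a = Fintype.card α := by
  simpa [letterCount] using (card_eq_sum_card_fiberwise (f := x) (s := univ) (t := univ)
    fun _ _ => mem_univ _).symm

lemma prod_comp_eq_prod_pow_letterCount {M : Type*} [CommMonoid M] (x : α → A) (f : A → M) :
    ∏ i, f (x i) = ∏ a, f a ^ letterCount x a := by
  rw [← prod_fiberwise univ x]
  exact prod_congr rfl fun a _ => prod_eq_pow_card fun i hi => by rw [(mem_filter.mp hi).2]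

lemma exists_letterCount_eq (c : A → ℕ) (hc : ∑ a, c a = Fintype.card α) :
    ∃ x : α → A, letterCount x = c := by
  let e : α ≃ Σ a, Fin (c a) := Fintype.equivOfCardEq (by simp [hc])
  refine ⟨fun i => (e i).1, funext fun a => ?_⟩
  rw [letterCount_eq_card_subtype,
    Fintype.card_congr (e.subtypeEquiv (q := fun s => s.1 = a) fun _ => Iff.rfl),
    Fintype.card_congr (Equiv.sigmaSubtype a), Fintype.card_fin]

omit [Fintype A] in
lemma exists_perm_comp_eq (x y : α → A) (h : letterCount x = letterCount y) :
    ∃ σ : Equiv.Perm α, y ∘ σ = x := by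
  have hfib : ∀ a, Fintype.card {i // x i = a} = Fintype.card {i // y i = a} := fun a => by
    simp only [← letterCount_eq_card_subtype, h]
  exact ⟨Equiv.ofFiberEquiv fun a => Fintype.equivOfCardEq (hfib a),
    funext (Equiv.ofFiberEquiv_map _)⟩

lemma card_perm_comp_eq (x y : α → A) (h : letterCount x = letterCount y) :
    Fintype.card {σ : Equiv.Perm α // y ∘ σ = x} = ∏ a, (letterCount y a)! := by
  obtain ⟨τ, rfl⟩ := exists_perm_comp_eq x y h
  let e : {σ : Equiv.Perm α // y ∘ σ = y ∘ τ} ≃ {σ : Equiv.Perm α // y ∘ σ = y} :=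
    (Equiv.mulRight τ⁻¹).subtypeEquiv fun σ => by
      rw [Equiv.coe_mulRight, Equiv.Perm.coe_mul, Equiv.Perm.coe_inv, ← Function.comp_assoc,
        Equiv.comp_symm_eq]
  rw [Fintype.card_congr e, DomMulAct.stabilizer_card]
  simp only [letterCount_eq_card_subtype]

lemma mem_typeClass [DecidableEq α] {x : α → A} {c : A → ℕ} :
    x ∈ typeClass α c ↔ letterCount x = c := by
  simp [typeClass]

lemma card_typeClass_mul_prod_factorial [DecidableEq α] (x₀ : α → A) :
    #(typeClass α (letterCount x₀)) * ∏ a, (letterCount x₀ a)! = (Fintype.card α)! := by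
  have hfiber := card_eq_sum_card_fiberwise (s := univ) (t := typeClass α (letterCount x₀))
    (f := fun σ : Equiv.Perm α => x₀ ∘ σ)
    fun σ _ => mem_typeClass.mpr (letterCount_comp_perm x₀ σ)
  rw [Finset.card_univ, Fintype.card_perm] at hfiber
  rw [hfiber, ← smul_eq_mul, ← sum_const]
  refine sum_congr rfl fun x hx => ?_
  rw [← card_perm_comp_eq x x₀ (mem_typeClass.mp hx), Fintype.card_subtype]

lemma sum_typeClass_prod [DecidableEq α] {R : Type*} [CommSemiring R] (P : A → R) (c : A → ℕ) :
    ∑ x ∈ typeClass α c, ∏ i, P (x i) = #(typeClass α c) * ∏ a, P a ^ c a := by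
  rw [← nsmul_eq_mul, ← sum_const]
  refine sum_congr rfl fun x hx => ?_
  rw [prod_comp_eq_prod_pow_letterCount, mem_typeClass.mp hx]

lemma sum_prod_eq_pow [DecidableEq α] {R : Type*} [CommSemiring R] (P : A → R) :
    ∑ x : α → A, ∏ i, P (x i) = (∑ a, P a) ^ Fintype.card α := by
  rw [← Fintype.prod_sum (fun (_ : α) a => P a), prod_const, Finset.card_univ]

lemma card_typeClass_mul_prod_pow_le [DecidableEq α] (y z : α → A) :
    #(typeClass α (letterCount y)) * ∏ a, letterCount z a ^ letterCount y a ≤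
      #(typeClass α (letterCount z)) * ∏ a, letterCount z a ^ letterCount z a := by
  set c := letterCount y
  set k := letterCount z
  have hpos : 0 < (∏ a, (c a)!) * ∏ a, (k a)! := by positivity
  refine Nat.le_of_mul_le_mul_right ?_ hpos
  calc #(typeClass α c) * (∏ a, k a ^ c a) * ((∏ a, (c a)!) * ∏ a, (k a)!)
      = (#(typeClass α c) * ∏ a, (c a)!) * ∏ a, k a ^ c a * (k a)! := by
        rw [prod_mul_distrib]; ring
    _ = (Fintype.card α)! * ∏ a, k a ^ c a * (k a)! := by rw [card_typeClass_mul_prod_factorial]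
    _ ≤ (Fintype.card α)! * ∏ a, k a ^ k a * (c a)! := by
        gcongr (_ : ℕ) * ?_
        exact prod_le_prod' fun a _ => Nat.pow_mul_factorial_le_pow_mul_factorial (k a) (c a)
    _ = (#(typeClass α k) * ∏ a, (k a)!) * ∏ a, k a ^ k a * (c a)! := by
        rw [card_typeClass_mul_prod_factorial]
    _ = #(typeClass α k) * (∏ a, k a ^ k a) * ((∏ a, (c a)!) * ∏ a, (k a)!) := by
        rw [prod_mul_distrib]; ring

omit [Fintype A] in
lemma letterCount_le (x : α → A) (a : A) : letterCount x a ≤ Fintype.card α :=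
  card_filter_le _ _

lemma sum_prod_le_one [DecidableEq α] {P : A → ℝ} (hP0 : ∀ a, 0 ≤ P a)
    (hP1 : ∑ a, P a = 1) (s : Finset (α → A)) : ∑ x ∈ s, ∏ i, P (x i) ≤ 1 :=
  calc ∑ x ∈ s, ∏ i, P (x i) ≤ ∑ x : α → A, ∏ i, P (x i) :=
        sum_le_sum_of_subset_of_nonneg (subset_univ s) fun x _ _ => prod_nonneg fun i _ => hP0 _
    _ = 1 := by rw [sum_prod_eq_pow, hP1, one_pow]

lemma sum_typeClass_prod_eq_zero [DecidableEq α] {Q : A → ℝ} {z : α → A} {a : A}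
    (hQ : Q a = 0) (hz : letterCount z a ≠ 0) :
    ∑ x ∈ typeClass α (letterCount z), ∏ i, Q (x i) = 0 := by
  rw [sum_typeClass_prod, prod_eq_zero (mem_univ a) (by rw [hQ, zero_pow hz]), mul_zero]

end StringType

open StringType

section EmpiricalPMF

variable {A : Type*} [Fintype A] {n : ℕ}

lemma empPMF_eq_letterCount_div (x : Fin n → A) (a : A) :
    empPMF n x a = letterCount x a / n := rfl

lemma empPMF_nonneg (x : Fin n → A) (a : A) : 0 ≤ empPMF n x a := by
  rw [empPMF_eq_letterCount_div]
  positivity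

lemma sum_empPMF (hn : n ≠ 0) (x : Fin n → A) : ∑ a, empPMF n x a = 1 := by
  simp only [empPMF_eq_letterCount_div, ← sum_div, ← Nat.cast_sum, sum_letterCount,
    Fintype.card_fin]
  exact div_self (Nat.cast_ne_zero.mpr hn)

lemma natCast_mul_empPMF (hn : n ≠ 0) (x : Fin n → A) (a : A) :
    (n : ℝ) * empPMF n x a = letterCount x a :=
  mul_div_cancel₀ _ (Nat.cast_ne_zero.mpr hn)

lemma empPMF_eq_empPMF_iff (hn : n ≠ 0) {x y : Fin n → A} :
    empPMF n x = empPMF n y ↔ letterCount x = letterCount y := by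
  simp only [funext_iff, empPMF_eq_letterCount_div,
    div_left_inj' (Nat.cast_ne_zero.mpr hn : (n : ℝ) ≠ 0), Nat.cast_inj]

lemma exists_empPMF_eq (hn : n ≠ 0) {P : A → ℝ} (hP1 : ∑ a, P a = 1)
    (hP : ∀ a, ∃ j : ℕ, P a = j / n) : ∃ z : Fin n → A, empPMF n z = P := by
  choose k hk using hP
  have hsum : ∑ a, k a = Fintype.card (Fin n) := by
    rw [Fintype.card_fin, ← Nat.cast_inj (R := ℝ), Nat.cast_sum,
      ← div_left_inj' (Nat.cast_ne_zero.mpr hn : (n : ℝ) ≠ 0), sum_div, div_self (by simpa),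
      ← hP1]
    exact sum_congr rfl fun a _ => (hk a).symm
  obtain ⟨z, hz⟩ := exists_letterCount_eq k hsum
  exact ⟨z, funext fun a => by rw [empPMF_eq_letterCount_div, hz, hk]⟩

lemma sum_typeClass_prod_empPMF_le (y z : Fin n → A) :
    ∑ x ∈ typeClass (Fin n) (letterCount y), ∏ i, empPMF n z (x i) ≤
      ∑ x ∈ typeClass (Fin n) (letterCount z), ∏ i, empPMF n z (x i) := by
  have hscale : ∀ w : Fin n → A,
      ∑ x ∈ typeClass (Fin n) (letterCount w), ∏ i, empPMF n z (x i) =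
        ((#(typeClass (Fin n) (letterCount w)) * ∏ a, letterCount z a ^ letterCount w a : ℕ) :
          ℝ) / (n : ℝ) ^ n := by
    intro w
    have hden : (n : ℝ) ^ n = ∏ a, (n : ℝ) ^ letterCount w a := by
      rw [prod_pow_eq_pow_sum, sum_letterCount, Fintype.card_fin]
    rw [sum_typeClass_prod, hden]
    push_cast
    rw [mul_div_assoc, ← prod_div_distrib]
    simp only [empPMF_eq_letterCount_div, div_pow]
  rw [hscale, hscale]
  exact div_le_div_of_nonneg_right (by exact_mod_cast card_typeClass_mul_prod_pow_le y z)
    (by positivity)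

lemma sum_prod_empPMF (z : Fin n → A) : ∑ x : Fin n → A, ∏ i, empPMF n z (x i) = 1 := by
  rw [sum_prod_eq_pow, Fintype.card_fin]
  rcases eq_or_ne n 0 with rfl | hn
  · exact pow_zero _
  · rw [sum_empPMF hn, one_pow]

lemma one_le_mul_sum_typeClass_prod_empPMF (z : Fin n → A) :
    1 ≤ ((n : ℝ) + 1) ^ Fintype.card A *
      ∑ x ∈ typeClass (Fin n) (letterCount z), ∏ i, empPMF n z (x i) := by
  let p : (A → ℕ) → ℝ := fun c => ∑ x ∈ typeClass (Fin n) c, ∏ i, empPMF n z (x i)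
  let counts : Finset (A → ℕ) := Fintype.piFinset fun _ => range (n + 1)
  have hcounts : ∀ x ∈ (univ : Finset (Fin n → A)), letterCount x ∈ counts := fun x _ =>
    Fintype.mem_piFinset.mpr fun a => mem_range_succ_iff.mpr <| by
      simpa using letterCount_le x a
  have hmax : ∀ c, p c ≤ p (letterCount z) := fun c => by
    rcases (typeClass (Fin n) c).eq_empty_or_nonempty with hc | ⟨y, hy⟩
    · simp only [p, hc, sum_empty]
      exact sum_nonneg fun x _ => prod_nonneg fun i _ => empPMF_nonneg z (x i)
    · rw [← mem_typeClass.mp hy]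
      exact sum_typeClass_prod_empPMF_le y z
  calc (1 : ℝ) = ∑ x : Fin n → A, ∏ i, empPMF n z (x i) := (sum_prod_empPMF z).symm
    _ = ∑ c ∈ counts, p c := (sum_fiberwise_of_maps_to hcounts _).symm
    _ ≤ ∑ _c ∈ counts, p (letterCount z) := sum_le_sum fun c _ => hmax c
    _ = ((n : ℝ) + 1) ^ Fintype.card A * p (letterCount z) := by
        rw [sum_const, Fintype.card_piFinset, prod_const, card_range, nsmul_eq_mul]
        push_cast
        rfl

lemma sum_typeClass_prod_eq_exp_mul (hn : n ≠ 0) (z : Fin n → A) {Q : A → ℝ}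
    (hQ0 : ∀ a, 0 ≤ Q a) (hac : ∀ a, Q a = 0 → empPMF n z a = 0) :
    ∑ x ∈ typeClass (Fin n) (letterCount z), ∏ i, Q (x i) =
      Real.exp (-n * ∑ a, empPMF n z a * Real.log (empPMF n z a / Q a)) *
        ∑ x ∈ typeClass (Fin n) (letterCount z), ∏ i, empPMF n z (x i) := by
  have hletter : ∀ a, Q a ^ letterCount z a =
      Real.exp (-(n * (empPMF n z a * Real.log (empPMF n z a / Q a)))) *
        empPMF n z a ^ letterCount z a := fun a => by
    rcases eq_or_ne (letterCount z a) 0 with h0 | h0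
    · simp [empPMF_eq_letterCount_div, h0]
    · have hp : 0 < empPMF n z a := by
        rw [empPMF_eq_letterCount_div]
        exact div_pos (by exact_mod_cast Nat.pos_of_ne_zero h0)
          (by exact_mod_cast Nat.pos_of_ne_zero hn)
      have hq : 0 < Q a := (hQ0 a).lt_of_ne fun h => hp.ne' (hac a h.symm)
      rw [← mul_assoc, natCast_mul_empPMF hn]
      exact Real.pow_eq_exp_neg_mul_log_div_mul_pow _ hp hq
  rw [sum_typeClass_prod, sum_typeClass_prod, mul_left_comm, prod_congr rfl fun a _ => hletter a,
    prod_mul_distrib, ← Real.exp_sum, sum_neg_distrib, ← mul_sum, neg_mul]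

end EmpiricalPMF

theorem type_class_prob_bounds_general {A : Type*} [Fintype A]
    (n : ℕ) (hn : 0 < n) (P Q : A → ℝ)
    (hP1 : (∑ a, P a) = 1)
    (hPtype : ∀ a, ∃ j : ℕ, P a = (j : ℝ) / n)
    (hQ0 : ∀ a, 0 ≤ Q a) :
    (((n + 1 : ℝ≥0∞) ^ (Fintype.card A))⁻¹ * EReal.exp (-(n : EReal) * relEntE P Q)
        ≤ ENNReal.ofReal
          (∑ x ∈ Finset.univ.filter (fun x : Fin n → A => empPMF n x = P), ∏ i, Q (x i))) ∧
    ENNReal.ofReal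
        (∑ x ∈ Finset.univ.filter (fun x : Fin n → A => empPMF n x = P), ∏ i, Q (x i))
      ≤ EReal.exp (-(n : EReal) * relEntE P Q) := by
  obtain ⟨z, rfl⟩ := exists_empPMF_eq hn.ne' hP1 hPtype
  have htype : univ.filter (fun x : Fin n → A => empPMF n x = empPMF n z) =
      typeClass (Fin n) (letterCount z) :=
    filter_congr fun x _ => empPMF_eq_empPMF_iff hn.ne'
  rw [htype]
  by_cases hac : ∀ a, Q a = 0 → empPMF n z a = 0
  · rw [relEntE, if_pos hac, EReal.exp_neg_natCast_mul_coe,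
      sum_typeClass_prod_eq_exp_mul hn.ne' z hQ0 hac]
    refine ⟨ENNReal.inv_natCast_add_one_pow_mul_ofReal_le (Real.exp_nonneg _)
      (one_le_mul_sum_typeClass_prod_empPMF z), ENNReal.ofReal_le_ofReal ?_⟩
    exact mul_le_of_le_one_right (Real.exp_nonneg _)
      (sum_prod_le_one (empPMF_nonneg z) (sum_empPMF hn.ne' z) _)
  · rw [relEntE, if_neg hac, EReal.exp_neg_natCast_mul_top hn]
    push Not at hac
    obtain ⟨a, hQa, hPa⟩ := hac
    have hza : letterCount z a ≠ 0 := fun h => hPa (by simp [empPMF_eq_letterCount_div, h])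
    rw [sum_typeClass_prod_eq_zero hQa hza, ENNReal.ofReal_zero, mul_zero]
    exact ⟨le_rfl, le_rfl⟩

/-- for any `n`-type `P` on `A` with `|A| = m` and any PMF `Q`,
`(n+1)^{-m} e^{-nD(P‖Q)} ≤ Q^n(T(P)) ≤ e^{-nD(P‖Q)}`. -/
theorem type_class_prob_bounds {A : Type*} [Fintype A]
    (n : ℕ) (hn : 0 < n) (P Q : A → ℝ)
    (hP0 : ∀ a, 0 ≤ P a) (hP1 : (∑ a, P a) = 1)
    (hPtype : ∀ a, ∃ j : ℕ, P a = (j : ℝ) / n)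
    (hQ0 : ∀ a, 0 ≤ Q a) (hQ1 : (∑ a, Q a) = 1) :
    (((n + 1 : ℝ≥0∞) ^ (Fintype.card A))⁻¹ * EReal.exp (-(n : EReal) * relEntE P Q)
        ≤ ENNReal.ofReal
          (∑ x ∈ Finset.univ.filter (fun x : Fin n → A => empPMF n x = P), ∏ i, Q (x i))) ∧
    ENNReal.ofReal
        (∑ x ∈ Finset.univ.filter (fun x : Fin n → A => empPMF n x = P), ∏ i, Q (x i))
      ≤ EReal.exp (-(n : EReal) * relEntE P Q) :=
  type_class_prob_bounds_general n hn P Q hP1 hPtype hQ0
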